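/- arXiv:2207.00123 — 7 statements merged into one kernel-verified Lean document; each statement's English description precedes it below -/
import Mathlib

section
/- Let f be a polynomial over ℂ of degree n with leading coefficient aₙ ≠ 0. For every ε > 0 there exists δ > 0 such that if g is a polynomial of degree at most n whose coefficients satisfy |coeff(f,i) - coeff(g,i)| < δ for all 0 ≤ i ≤ n, then every root s of g lies within distance ε of some root of f. -/
/-!
If every root `r` of `f` satisfied `‖s - r‖ ≥ ε`, the factorisation `f = a ∏ (X - r)` would give
`‖f(s)‖ ≥ ‖a‖ ε ^ n`. But for `g` close enough to `f` the leading coefficient of `g` stays away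
from `0`, so Cauchy's bound confines the roots of all such `g` to one disc `‖s‖ ≤ R`, and there
`‖f(s)‖ = ‖(f - g)(s)‖ ≤ (n + 1) δ R ^ n`, which is smaller than `‖a‖ ε ^ n` once `δ` is small.
-/

open Polynomial

namespace Polynomial

section NormedDivisionRing

variable {K : Type*} [NormedDivisionRing K]

theorem norm_eval_lt_of_norm_coeff_lt {p : K[X]} {n : ℕ} (hp : p.natDegree ≤ n) {δ : ℝ}
    (hδ : ∀ i ≤ n, ‖p.coeff i‖ < δ) (s : K) :
    ‖p.eval s‖ < (n + 1) * δ * max 1 ‖s‖ ^ n := by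
  have hpow : ∀ i ≤ n, ‖s‖ ^ i ≤ max 1 ‖s‖ ^ n := fun i hi =>
    (pow_le_pow_left₀ (norm_nonneg s) (le_max_right 1 ‖s‖) i).trans
      (pow_le_pow_right₀ (le_max_left 1 ‖s‖) hi)
  calc ‖p.eval s‖ = ‖∑ i ∈ Finset.range (n + 1), p.coeff i * s ^ i‖ := by
        rw [eval_eq_sum_range' (Nat.lt_succ_of_le hp)]
    _ ≤ ∑ i ∈ Finset.range (n + 1), ‖p.coeff i‖ * ‖s‖ ^ i := by
        simpa only [norm_mul, norm_pow] using
          norm_sum_le (Finset.range (n + 1)) fun i => p.coeff i * s ^ i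
    _ < ∑ _i ∈ Finset.range (n + 1), δ * max 1 ‖s‖ ^ n := by
        refine Finset.sum_lt_sum_of_nonempty Finset.nonempty_range_add_one fun i hi => ?_
        have hi : i ≤ n := Nat.lt_succ_iff.1 (Finset.mem_range.1 hi)
        exact mul_lt_mul_of_lt_of_le_of_nonneg_of_pos (hδ i hi) (hpow i hi) (norm_nonneg _)
          (by positivity)
    _ = (n + 1) * δ * max 1 ‖s‖ ^ n := by simp [mul_assoc]

theorem norm_le_of_isRoot_of_norm_coeff_le {p : K[X]} {n : ℕ} (hp : p.natDegree ≤ n)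
    {c C : ℝ} (hc : 0 < c) (hC : 0 ≤ C) (hcn : c ≤ ‖p.coeff n‖) (hCi : ∀ i < n, ‖p.coeff i‖ ≤ C)
    {s : K} (hs : p.IsRoot s) : ‖s‖ ≤ C / c + 1 := by
  have hpn : p.coeff n ≠ 0 := norm_pos_iff.1 (hc.trans_le hcn)
  have hdeg : p.natDegree = n := natDegree_eq_of_le_of_coeff_ne_zero hp hpn
  have hsup : (((Finset.range n).sup fun i => ‖p.coeff i‖₊ : NNReal) : ℝ) ≤ C := by
    rw [← Real.le_toNNReal_iff_coe_le hC]
    refine Finset.sup_le fun i hi => ?_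
    rw [← NNReal.coe_le_coe, Real.coe_toNNReal C hC, coe_nnnorm]
    exact hCi i (Finset.mem_range.1 hi)
  have hbound := hs.norm_lt_cauchyBound (fun h => hpn (by simp [h]))
  rw [← NNReal.coe_lt_coe, cauchyBound, hdeg, leadingCoeff, hdeg] at hbound
  push_cast at hbound
  calc ‖s‖ ≤ _ := hbound.le
    _ ≤ C / c + 1 := by gcongr

theorem norm_le_of_isRoot_of_norm_coeff_sub_le {f g : K[X]} {n : ℕ} (hg : g.natDegree ≤ n)
    (hfn : f.coeff n ≠ 0) (hfg : ∀ i ≤ n, ‖f.coeff i - g.coeff i‖ ≤ min 1 (‖f.coeff n‖ / 2))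
    {s : K} (hs : g.IsRoot s) :
    ‖s‖ ≤ (∑ i ∈ Finset.range n, ‖f.coeff i‖ + 1) / (‖f.coeff n‖ / 2) + 1 := by
  have hgn : ‖f.coeff n‖ / 2 ≤ ‖g.coeff n‖ := by
    linarith [norm_sub_norm_le (f.coeff n) (g.coeff n), (hfg n le_rfl).trans (min_le_right _ _)]
  have hgi : ∀ i < n, ‖g.coeff i‖ ≤ ∑ j ∈ Finset.range n, ‖f.coeff j‖ + 1 := fun i hi => by
    have hfi := Finset.single_le_sum (fun j _ => norm_nonneg (f.coeff j)) (Finset.mem_range.2 hi)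
    linarith [norm_sub_norm_le (g.coeff i) (f.coeff i), norm_sub_rev (g.coeff i) (f.coeff i),
      (hfg i hi.le).trans (min_le_left _ _)]
  exact norm_le_of_isRoot_of_norm_coeff_le hg (half_pos (norm_pos_iff.2 hfn)) (by positivity)
    hgn hgi hs

end NormedDivisionRing

theorem exists_isRoot_norm_sub_lt_of_norm_eval_lt {K : Type*} [NormedField K] {f : K[X]}
    (hf : f.Splits) {s : K} {ε : ℝ} (hε : 0 ≤ ε)
    (h : ‖f.eval s‖ < ‖f.leadingCoeff‖ * ε ^ f.natDegree) :
    ∃ r, f.IsRoot r ∧ ‖s - r‖ < ε := by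
  by_contra! hfar
  refine h.not_ge ?_
  rw [hf.eval_eq_prod_roots, norm_mul]
  gcongr
  calc ε ^ f.natDegree = (f.roots.map fun _ => ε).prod := by
        simp [hf.natDegree_eq_card_roots]
    _ ≤ (f.roots.map (‖s - ·‖)).prod :=
        Multiset.prod_map_le_prod_map₀ _ _ (fun _ _ => hε)
          fun r hr => hfar r (isRoot_of_mem_roots hr)
    _ = ‖(f.roots.map (s - ·)).prod‖ := by
        simp [← normHom_apply, ← Multiset.prod_hom']

end Polynomial

theorem root_of_perturbation_near_root
    (n : ℕ) (f : Polynomial ℂ) (hf : f.natDegree = n) (hfn : f.coeff n ≠ 0) :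
    ∀ ε > 0, ∃ δ > 0, ∀ g : Polynomial ℂ, g.natDegree ≤ n →
      (∀ i ≤ n, ‖f.coeff i - g.coeff i‖ < δ) →
      ∀ s : ℂ, g.eval s = 0 → ∃ r : ℂ, f.eval r = 0 ∧ ‖s - r‖ < ε := by
  intro ε hε
  set a := ‖f.coeff n‖
  set R := (∑ i ∈ Finset.range n, ‖f.coeff i‖ + 1) / (a / 2) + 1
  have hR : 1 ≤ R := le_add_of_nonneg_left (by positivity)
  obtain ⟨δ, hδ, hδR, hδε⟩ : ∃ δ > 0, δ ≤ min 1 (a / 2) ∧ δ ≤ a * ε ^ n / ((n + 1) * R ^ n) :=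
    ⟨_, by positivity, min_le_left _ _, min_le_right _ _⟩
  refine ⟨δ, hδ, fun g hg hfg s hs => ?_⟩
  have hsR : ‖s‖ ≤ R :=
    norm_le_of_isRoot_of_norm_coeff_sub_le hg hfn (fun i hi => (hfg i hi).le.trans hδR) hs
  have hfs : ‖f.eval s‖ < ‖f.leadingCoeff‖ * ε ^ f.natDegree := by
    rw [leadingCoeff, hf]
    calc ‖f.eval s‖ = ‖(f - g).eval s‖ := by simp [hs]
      _ < (n + 1) * δ * max 1 ‖s‖ ^ n :=
          norm_eval_lt_of_norm_coeff_lt ((natDegree_sub_le f g).trans (max_le hf.le hg))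
            (by simpa only [coeff_sub] using hfg) s
      _ ≤ (n + 1) * (a * ε ^ n / ((n + 1) * R ^ n)) * R ^ n := by
          gcongr
          exact max_le hR hsR
      _ = a * ε ^ n := by field_simp
  exact exists_isRoot_norm_sub_lt_of_norm_eval_lt (IsAlgClosed.splits f) hε.le hfs
end

section
/- Let (gₖ) be a sequence of polynomials over ℂ of degree at most n whose coefficients converge coefficientwise to those of a polynomial f of degree exactly n. Then for each k with gₖ of degree n, every root of gₖ, and the sequence of roots sₖ chosen arbitrarily, (sₖ) is bounded and every limit point of (sₖ) is a root of f. -/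
/-!
Cauchy's bound `max_{i<n} |aᵢ| / |aₙ| + 1` on the roots of `∑ aᵢ Xⁱ` depends continuously on the
coefficients as long as the leading one stays nonzero, so it converges along `gₖ` and is therefore
bounded. Along a subsequence `sₖ → l`, joint continuity of evaluation gives
`0 = gₖ(sₖ) → f(l)`.
-/

open Polynomial Filter Finset Topology

namespace Polynomial

theorem tendsto_eval_of_tendsto_coeff {R ι : Type*} [Semiring R] [TopologicalSpace R]
    [IsTopologicalSemiring R] {l : Filter ι} {g : ι → R[X]} {f : R[X]} {n : ℕ}
    (hg : ∀ k, (g k).natDegree ≤ n) (hf : f.natDegree ≤ n)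
    (hcoeff : ∀ i ≤ n, Tendsto (fun k => (g k).coeff i) l (𝓝 (f.coeff i)))
    {x : ι → R} {a : R} (hx : Tendsto x l (𝓝 a)) :
    Tendsto (fun k => (g k).eval (x k)) l (𝓝 (f.eval a)) := by
  have hgeval : ∀ k, (g k).eval (x k) = ∑ i ∈ range (n + 1), (g k).coeff i * x k ^ i :=
    fun k => eval_eq_sum_range' (Nat.lt_succ_of_le (hg k)) _
  simp only [hgeval, eval_eq_sum_range' (Nat.lt_succ_of_le hf)]
  exact tendsto_finsetSum _ fun i hi =>
    (hcoeff i (Nat.lt_succ_iff.1 (mem_range.1 hi))).mul (hx.pow i)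

theorem tendsto_cauchyBound {K ι : Type*} [NormedField K] {l : Filter ι} {g : ι → K[X]}
    {f : K[X]} (hf : f ≠ 0) (hg : ∀ k, (g k).natDegree = f.natDegree)
    (hcoeff : ∀ i ≤ f.natDegree, Tendsto (fun k => (g k).coeff i) l (𝓝 (f.coeff i))) :
    Tendsto (fun k => cauchyBound (g k)) l (𝓝 (cauchyBound f)) := by
  simp only [cauchyBound, leadingCoeff, hg]
  refine (Tendsto.div ?_ (hcoeff _ le_rfl).nnnorm (by simpa using hf)).add_const 1
  exact Tendsto.finset_sup_nhds_apply fun i hi => (hcoeff i (mem_range.1 hi).le).nnnorm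

end Polynomial

theorem roots_bounded_and_cluster_points_are_roots
    (n : ℕ) (f : Polynomial ℂ) (hf : f.natDegree = n) (hfn : f.coeff n ≠ 0)
    (g : ℕ → Polynomial ℂ) (hg : ∀ k, (g k).natDegree = n)
    (hcoeff : ∀ i ≤ n, Tendsto (fun k => (g k).coeff i) atTop (nhds (f.coeff i)))
    (s : ℕ → ℂ) (hroot : ∀ k, (g k).eval (s k) = 0) :
    (∃ C : ℝ, ∀ k, ‖s k‖ ≤ C) ∧
      ∀ l : ℂ, MapClusterPt l atTop s → f.eval l = 0 := by
  -- A vanishing `g k` forces `n = 0`; then every `g j` is a constant with a root, hence zero.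
  have hg_ne : ∀ k, g k ≠ 0 := by
    rintro k hk
    obtain rfl : n = 0 := by rw [← hg k, hk, natDegree_zero]
    have hcoeff_zero : ∀ j, (g j).coeff 0 = 0 := fun j => by
      have hroot_j := hroot j
      rwa [eq_C_of_natDegree_eq_zero (hg j), eval_C] at hroot_j
    exact hfn (tendsto_nhds_unique (hcoeff 0 le_rfl) (by simp [hcoeff_zero]))
  subst hf
  refine ⟨?_, fun l hl => ?_⟩
  · obtain ⟨C, hC⟩ := (tendsto_cauchyBound (by rintro rfl; simp at hfn) hg hcoeff).bddAbove_range
    exact ⟨C, fun k => (IsRoot.norm_lt_cauchyBound (hg_ne k) (hroot k)).le.trans (hC ⟨k, rfl⟩)⟩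
  · obtain ⟨ψ, hψ, hsψ⟩ := hl.tendsto_subseq
    have hlim := tendsto_eval_of_tendsto_coeff (fun k => (hg (ψ k)).le) le_rfl
      (fun i hi => (hcoeff i hi).comp hψ.tendsto_atTop) hsψ
    simp only [Function.comp_apply, hroot] at hlim
    exact (tendsto_nhds_unique tendsto_const_nhds hlim).symm
end

section
/- Let gₖ be polynomials over ℂ of degree at most n such that for every z ∈ ℂ the sequence gₖ(z) is bounded. Then the coefficient sequences coeff(gₖ, i) are bounded for each 0 ≤ i ≤ n. -/
/-!
A polynomial of degree at most `n` is the Lagrange interpolant of its values at the `n + 1`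
nodes `0, 1, …, n`, so each of its coefficients is a fixed linear combination of these values.
Bounds on the values at the nodes, uniform along the sequence, therefore bound the coefficients.
-/

open Polynomial Finset

namespace Lagrange

variable {F ι : Type*} [DecidableEq ι] {s : Finset ι} {v : ι → F}

theorem coeff_eq_sum_eval_mul_coeff_basis [Field F] (hvs : Set.InjOn v s) {p : F[X]}
    (hp : p.degree < #s) (i : ℕ) :
    p.coeff i = ∑ j ∈ s, p.eval (v j) * (Lagrange.basis s v j).coeff i := by
  conv_lhs => rw [eq_interpolate hvs hp, interpolate_apply, finsetSum_coeff]
  simp only [coeff_C_mul]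

theorem norm_coeff_le_sum_of_norm_eval_le [NormedField F] (hvs : Set.InjOn v s) {p : F[X]}
    (hp : p.degree < #s) {C : ι → ℝ} (hC : ∀ j ∈ s, ‖p.eval (v j)‖ ≤ C j) (i : ℕ) :
    ‖p.coeff i‖ ≤ ∑ j ∈ s, C j * ‖(Lagrange.basis s v j).coeff i‖ := by
  rw [coeff_eq_sum_eval_mul_coeff_basis hvs hp]
  refine (norm_sum_le _ _).trans (sum_le_sum fun j hj => ?_)
  rw [norm_mul]
  exact mul_le_mul_of_nonneg_right (hC j hj) (norm_nonneg _)

end Lagrange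

theorem coeffs_bounded_of_values_bounded
    (n : ℕ) (g : ℕ → Polynomial ℂ) (hg : ∀ k, (g k).natDegree ≤ n)
    (hbdd : ∀ z : ℂ, ∃ C : ℝ, ∀ k, ‖(g k).eval z‖ ≤ C) :
    ∀ i ≤ n, ∃ C : ℝ, ∀ k, ‖(g k).coeff i‖ ≤ C := by
  intro i _
  choose C hC using fun j : ℕ => hbdd j
  have hnodes : Set.InjOn (fun j : ℕ => (j : ℂ)) (range (n + 1)) :=
    Nat.cast_injective.injOn
  have hdeg (k : ℕ) : (g k).degree < #(range (n + 1)) := by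
    rw [card_range]
    exact (degree_le_of_natDegree_le (hg k)).trans_lt (by exact_mod_cast n.lt_succ_self)
  exact ⟨_, fun k =>
    Lagrange.norm_coeff_le_sum_of_norm_eval_le hnodes (hdeg k) (fun j _ => hC j k) i⟩
end

section
/- Let f be a polynomial over ℂ of degree n ≥ 1 with leading coefficient aₙ ≠ 0, let r be a root of f, and write f = (X - r)·f̂. Suppose (gₖ) are polynomials of degree n converging coefficientwise to f, and sₖ is a root of gₖ with sₖ → r; write gₖ = (X - sₖ)·ĝₖ. Then ĝₖ → f̂ coefficientwise. -/
open Polynomial Filter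

theorem quotient_converges
    (n : ℕ) (hn : 1 ≤ n) (f : Polynomial ℂ) (hf : f.natDegree = n)
    (hfn : f.coeff n ≠ 0)
    (r : ℂ) (hr : f.eval r = 0) (fhat : Polynomial ℂ) (hfact : f = (X - C r) * fhat)
    (g : ℕ → Polynomial ℂ) (hg : ∀ k, (g k).natDegree = n)
    (hcoeff : ∀ i ≤ n, Tendsto (fun k => (g k).coeff i) atTop (nhds (f.coeff i)))
    (s : ℕ → ℂ) (hroot : ∀ k, (g k).eval (s k) = 0)
    (hs : Tendsto s atTop (nhds r))
    (ghat : ℕ → Polynomial ℂ) (hgact : ∀ k, g k = (X - C (s k)) * ghat k) :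
    ∀ i, Tendsto (fun k => (ghat k).coeff i) atTop (nhds (fhat.coeff i)) := by
  -- basic nonvanishing facts
  have hfne : f ≠ 0 := fun h => hfn (by simp [h])
  have hgne : ∀ k, g k ≠ 0 := by
    intro k h
    have := hg k
    rw [h, natDegree_zero] at this
    omega
  have hghatne : ∀ k, ghat k ≠ 0 := by
    intro k h
    exact hgne k (by rw [hgact k, h, mul_zero])
  have hfhatne : fhat ≠ 0 := fun h => hfne (by rw [hfact, h, mul_zero])
  -- degrees of the quotients
  have hghatdeg : ∀ k, (ghat k).natDegree = n - 1 := by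
    intro k
    have := hg k
    rw [hgact k, natDegree_mul (X_sub_C_ne_zero _) (hghatne k), natDegree_X_sub_C] at this
    omega
  have hfhatdeg : fhat.natDegree = n - 1 := by
    have := hf
    rw [hfact, natDegree_mul (X_sub_C_ne_zero _) hfhatne, natDegree_X_sub_C] at this
    omega
  -- recurrence for coefficients of the quotient
  have hgrec : ∀ k i, (ghat k).coeff i = (g k).coeff (i + 1) + s k * (ghat k).coeff (i + 1) := by
    intro k i
    have : (g k).coeff (i + 1) = (ghat k).coeff i - s k * (ghat k).coeff (i + 1) := by
      rw [hgact k, mul_comm, coeff_mul_X_sub_C]; ring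
    rw [this]; ring
  have hfrec : ∀ i, fhat.coeff i = f.coeff (i + 1) + r * fhat.coeff (i + 1) := by
    intro i
    have : f.coeff (i + 1) = fhat.coeff i - r * fhat.coeff (i + 1) := by
      rw [hfact, mul_comm, coeff_mul_X_sub_C]; ring
    rw [this]; ring
  -- vanishing above degree
  have hgz : ∀ k i, n ≤ i → (ghat k).coeff i = 0 := by
    intro k i hi
    exact coeff_eq_zero_of_natDegree_lt (by rw [hghatdeg k]; omega)
  have hfz : ∀ i, n ≤ i → fhat.coeff i = 0 := by
    intro i hi
    exact coeff_eq_zero_of_natDegree_lt (by rw [hfhatdeg]; omega)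
  -- downward induction
  have key : ∀ m i, n ≤ i + m →
      Tendsto (fun k => (ghat k).coeff i) atTop (nhds (fhat.coeff i)) := by
    intro m
    induction m with
    | zero =>
      intro i hi
      simp only [Nat.add_zero] at hi
      simp only [hgz _ _ hi, hfz _ hi]
      exact tendsto_const_nhds
    | succ m ih =>
      intro i hi
      by_cases h : n ≤ i + m
      · exact ih i h
      · have hgi : Tendsto (fun k => (g k).coeff (i + 1)) atTop (nhds (f.coeff (i + 1))) := by
          by_cases h1 : i + 1 ≤ n
          · exact hcoeff _ h1
          · have hz : ∀ k, (g k).coeff (i + 1) = 0 := fun k =>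
              coeff_eq_zero_of_natDegree_lt (by rw [hg k]; omega)
            have hz' : f.coeff (i + 1) = 0 :=
              coeff_eq_zero_of_natDegree_lt (by rw [hf]; omega)
            simp only [hz, hz']
            exact tendsto_const_nhds
        have hih := ih (i + 1) (by omega)
        have := hgi.add (hs.mul hih)
        have e1 : (fun k => (ghat k).coeff i)
            = fun k => (g k).coeff (i + 1) + s k * (ghat k).coeff (i + 1) :=
          funext fun k => hgrec k i
        rw [e1, hfrec i]
        exact this
  intro i
  exact key n i (by omega)
end

section
/- Let f be a complex polynomial of degree n with roots r₁,…,rₙ counted with multiplicity, and let ε > 0 be smaller than half the minimum distance between distinct roots of f. Then there exists δ > 0 such that any polynomial g of degree n with coefficients within δ of those of f has exactly m roots (with multiplicity) in the open disk of radius ε around r, where m is the multiplicity of r as a root of f, for each distinct root r of f. -/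
/-!
If no δ worked, there would be polynomials `g m` of degree `n` whose coefficients tend to those
of `f` but whose roots cannot be matched within `ε` to the roots of `f`. Cauchy's bound keeps
the roots of the `g m` in a fixed ball, so along a subsequence enumerations `v m` of them
converge to some `w`. Passing to the limit in `(g m).eval x = lc (g m) * ∏ j, (x - v m j)`
gives `f = C (lc f) * ∏ j, (X - C (w j))`, so `w` enumerates the roots of `f`: a contradiction.
Once the roots of `g` are matched within `ε` to those of `f`, the `2ε`-separation of the roots
of `f` means the roots of `g` in the `ε`-disk around `r` are exactly those matched to `r`.
-/

open Polynomial Filter Metric Topology Finset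
open scoped Classical

theorem Multiset.exists_eq_map_fin {α : Type*} {n : ℕ} (s : Multiset α)
    (h : Multiset.card s = n) :
    ∃ v : Fin n → α, s = univ.val.map v := by
  subst h
  refine ⟨fun j => s.toList.get (j.cast (by simp)), ?_⟩
  rw [Fin.univ_val_map]
  conv_lhs => rw [← Multiset.coe_toList s]
  congr 1
  exact List.ext_get (by simp) fun i _ _ => by simp

theorem Polynomial.IsRoot.norm_lt_sum_norm_coeff_div_add_one {K : Type*} [NormedField K]
    {p : K[X]} (hp : p ≠ 0) {z : K} (hz : p.IsRoot z) :
    ‖z‖ < (∑ i ∈ range p.natDegree, ‖p.coeff i‖) / ‖p.leadingCoeff‖ + 1 := by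
  have hsup :
      cauchyBound p ≤ (∑ i ∈ range p.natDegree, ‖p.coeff i‖₊) / ‖p.leadingCoeff‖₊ + 1 := by
    unfold cauchyBound
    gcongr
    exact Finset.sup_le fun i hi =>
      single_le_sum (f := (‖p.coeff ·‖₊)) (fun _ _ => zero_le) hi
  simpa using NNReal.coe_lt_coe.2 ((hz.norm_lt_cauchyBound hp).trans_le hsup)

theorem Polynomial.tendsto_eval_of_tendsto_coeff_s13 {R ι : Type*} [CommSemiring R]
    [TopologicalSpace R] [IsTopologicalSemiring R] {l : Filter ι} {n : ℕ} {f : R[X]} {g : ι → R[X]}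
    (hf : f.natDegree ≤ n) (hg : ∀ m, (g m).natDegree ≤ n)
    (hcoeff : ∀ i, Tendsto (fun m => (g m).coeff i) l (𝓝 (f.coeff i))) (x : R) :
    Tendsto (fun m => (g m).eval x) l (𝓝 (f.eval x)) := by
  have hgx : ∀ m, (g m).eval x = ∑ i ∈ range (n + 1), (g m).coeff i * x ^ i :=
    fun m => eval_eq_sum_range' (Nat.lt_succ_of_le (hg m)) x
  rw [eval_eq_sum_range' (Nat.lt_succ_of_le hf)]
  simp only [hgx]
  exact tendsto_finsetSum _ fun i _ => (hcoeff i).mul_const _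

theorem Polynomial.eventually_forall_mem_roots_norm_le {K ι : Type*} [NormedField K]
    {l : Filter ι} {n : ℕ} {f : K[X]} (hf : f.natDegree = n) (hf0 : f ≠ 0) {g : ι → K[X]}
    (hg : ∀ m, (g m).natDegree = n)
    (hcoeff : ∀ i, Tendsto (fun m => (g m).coeff i) l (𝓝 (f.coeff i))) :
    ∃ R ≥ 0, ∀ᶠ m in l, ∀ z ∈ (g m).roots, ‖z‖ ≤ R := by
  let B : K[X] → ℝ := fun p => (∑ i ∈ range n, ‖p.coeff i‖) / ‖p.coeff n‖ + 1
  have hB : Tendsto (fun m => B (g m)) l (𝓝 (B f)) :=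
    ((tendsto_finsetSum _ fun i _ => (hcoeff i).norm).div (hcoeff n).norm
      (by simpa [← hf] using hf0)).add_const 1
  refine ⟨B f + 1, by positivity,
    (hB.eventually (gt_mem_nhds (lt_add_one _))).mono fun m hm z hz => ?_⟩
  have := (isRoot_of_mem_roots hz).norm_lt_sum_norm_coeff_div_add_one (ne_zero_of_mem_roots hz)
  rw [leadingCoeff, hg m] at this
  exact (this.trans hm).le

theorem Polynomial.roots_eq_map_of_tendsto {K ι : Type*} [NormedField K] [IsAlgClosed K]
    {l : Filter ι} [l.NeBot] {n : ℕ} {f : K[X]} (hf : f.natDegree = n) (hf0 : f ≠ 0)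
    {g : ι → K[X]} (hg : ∀ m, (g m).natDegree = n)
    (hcoeff : ∀ i, Tendsto (fun m => (g m).coeff i) l (𝓝 (f.coeff i)))
    {v : ι → Fin n → K} (hv : ∀ m, (g m).roots = univ.val.map (v m))
    {w : Fin n → K} (hw : Tendsto v l (𝓝 w)) :
    f.roots = univ.val.map w := by
  have heval : ∀ m x, (g m).eval x = (g m).coeff n * ∏ j, (x - v m j) := fun m x => by
    rw [(IsAlgClosed.splits _).eval_eq_prod_roots, hv m, leadingCoeff, hg m, Multiset.map_map]
    rfl
  have hf_eq : f = C (f.coeff n) * ∏ j, (X - C (w j)) := by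
    refine Polynomial.funext fun x => tendsto_nhds_unique
      (tendsto_eval_of_tendsto_coeff_s13 hf.le (fun m => (hg m).le) hcoeff x) ?_
    simp only [heval, eval_mul, eval_C, eval_prod, eval_sub, eval_X]
    exact (hcoeff n).mul <| tendsto_finsetProd _ fun j _ =>
      tendsto_const_nhds.sub (tendsto_pi_nhds.1 hw j)
  have ha : f.coeff n ≠ 0 := by rwa [← hf, ← leadingCoeff, leadingCoeff_ne_zero]
  rw [hf_eq, roots_C_mul _ ha, prod_eq_multiset_prod]
  rw [← Function.comp_def (X - C ·) w, ← Multiset.map_map, roots_multiset_prod_X_sub_C]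

theorem Polynomial.exists_pos_forall_roots_matching {K : Type*} [NormedField K] [IsAlgClosed K]
    [ProperSpace K] {n : ℕ} {f : K[X]} (hf : f.natDegree = n) (hf0 : f ≠ 0) {ε : ℝ}
    (hε : 0 < ε) :
    ∃ δ > 0, ∀ g : K[X], g.natDegree = n →
      (∀ i ≤ n, ‖f.coeff i - g.coeff i‖ < δ) →
      ∃ v w : Fin n → K, g.roots = univ.val.map v ∧ f.roots = univ.val.map w ∧
        ∀ j, ‖v j - w j‖ < ε := by
  by_contra! hbad
  choose g hg hclose hfar using fun m : ℕ => hbad (1 / (m + 1)) Nat.one_div_pos_of_nat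
  have hcoeff : ∀ i, Tendsto (fun m => (g m).coeff i) atTop (𝓝 (f.coeff i)) := by
    intro i
    rcases le_or_gt i n with hi | hi
    · rw [tendsto_iff_norm_sub_tendsto_zero]
      refine squeeze_zero (fun _ => norm_nonneg _) (fun m => ?_)
        tendsto_one_div_add_atTop_nhds_zero_nat
      rw [norm_sub_rev]
      exact (hclose m i hi).le
    · have hgi : ∀ m, (g m).coeff i = 0 := fun m => coeff_eq_zero_of_natDegree_lt (hg m ▸ hi)
      simp only [hgi, coeff_eq_zero_of_natDegree_lt (hf ▸ hi), tendsto_const_nhds]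
  choose v hv using fun m =>
    (g m).roots.exists_eq_map_fin (by rw [IsAlgClosed.card_roots_eq_natDegree, hg m])
  obtain ⟨R, hR0, hR⟩ := eventually_forall_mem_roots_norm_le hf hf0 hg hcoeff
  have hvR : ∀ᶠ m in atTop, v m ∈ closedBall 0 R := hR.mono fun m hm =>
    mem_closedBall_zero_iff.2 <| (pi_norm_le_iff_of_nonneg hR0).2 fun j =>
      hm _ (hv m ▸ Multiset.mem_map_of_mem _ (mem_univ_val j))
  obtain ⟨w, -, φ, hφ, hvw⟩ :=
    tendsto_subseq_of_frequently_bounded isBounded_closedBall hvR.frequently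
  have hw := roots_eq_map_of_tendsto hf hf0 (fun k => hg (φ k))
    (fun i => (hcoeff i).comp hφ.tendsto_atTop) (fun k => hv (φ k)) hvw
  obtain ⟨k, hk⟩ := (hvw.eventually (ball_mem_nhds w hε)).exists
  obtain ⟨j, hj⟩ := hfar (φ k) (v (φ k)) w (hv _) hw
  exact hj.not_gt (by simpa [dist_eq_norm] using (dist_pi_lt_iff hε).1 hk j)

theorem Multiset.card_filter_norm_sub_lt_eq_count {E ι : Type*} [SeminormedAddCommGroup E]
    [DecidableEq E] [Fintype ι] {s t : Multiset E} {v w : ι → E} (hs : s = univ.val.map v)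
    (ht : t = univ.val.map w) {ε : ℝ} (hvw : ∀ j, ‖v j - w j‖ < ε)
    (hsep : ∀ r ∈ t, ∀ r' ∈ t, r ≠ r' → 2 * ε < ‖r - r'‖) {r : E} (hr : r ∈ t) :
    card (s.filter fun z => ‖z - r‖ < ε) = t.count r := by
  subst hs ht
  rw [count_map, filter_map, card_map]
  congr 1
  refine filter_congr fun j _ => ⟨fun (hj : ‖v j - r‖ < ε) => ?_, fun hj => hj ▸ hvw j⟩
  by_contra hne
  have hfar := hsep (w j) (mem_map_of_mem w (mem_univ_val j)) r hr (Ne.symm hne)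
  have := norm_sub_le_norm_sub_add_norm_sub (w j) (v j) r
  rw [norm_sub_rev (w j) (v j)] at this
  linarith [hvw j]

theorem multiplicity_preserved
    (n : ℕ) (f : Polynomial ℂ) (hf : f.natDegree = n)
    (ε : ℝ) (hε : 0 < ε)
    (hsep : ∀ r ∈ f.roots, ∀ r' ∈ f.roots, r ≠ r' → 2 * ε < ‖r - r'‖) :
    ∃ δ > (0 : ℝ), ∀ g : Polynomial ℂ, g.natDegree = n →
      (∀ i ≤ n, ‖f.coeff i - g.coeff i‖ < δ) →
      ∀ r ∈ f.roots,
        Multiset.card (g.roots.filter fun z => ‖z - r‖ < ε) =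
          f.roots.count r := by
  rcases eq_or_ne f 0 with rfl | hf0
  · exact ⟨1, one_pos, by simp⟩
  obtain ⟨δ, hδ, hmatch⟩ := exists_pos_forall_roots_matching hf hf0 hε
  refine ⟨δ, hδ, fun g hg hclose r hr => ?_⟩
  obtain ⟨v, w, hv, hw, hvw⟩ := hmatch g hg hclose
  exact Multiset.card_filter_norm_sub_lt_eq_count hv hw hvw hsep hr
end

section
/- The map from the space of monic complex polynomials of degree n (identified with ℂⁿ via their non-leading coefficients) to the space of multisets of n complex numbers (with the natural metric: the minimum over bijections of the maximum pairwise distance) sending a polynomial to its multiset of roots is continuous. -/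
/-!
Induction on the degree. Fix a root `a` of `p`. Every monic `q` whose coefficients are close to
those of `p` has a root `b` close to `a` (`Polynomial.exists_roots_norm_sub_lt_of_norm_coeff_sub_lt`).
The coefficients of the quotient by `X - b` are polynomial in `b` and the coefficients of the
dividend, so `q /ₘ (X - C b)` has coefficients close to those of `p /ₘ (X - C a)`. The induction
hypothesis matches the roots of the two quotients, and `a` is matched with `b`.
-/

open Polynomial Finset Filter Topology

theorem Multiset.Rel.exists_ofFn {α β : Type*} {r : α → β → Prop} {s : Multiset α}
    {t : Multiset β} (h : s.Rel r t) {n : ℕ} (hs : Multiset.card s = n) :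
    ∃ (u : Fin n → α) (v : Fin n → β), s = (List.ofFn u : Multiset α) ∧
      t = (List.ofFn v : Multiset β) ∧ ∀ i, r (u i) (v i) := by
  induction h generalizing n with
  | zero =>
    rw [Multiset.card_zero] at hs
    subst hs
    exact ⟨Fin.elim0, Fin.elim0, rfl, rfl, fun i => i.elim0⟩
  | @cons a b as bs hab _ ih =>
    obtain ⟨m, rfl⟩ : ∃ m, n = m + 1 := ⟨_, (Multiset.card_cons a as ▸ hs).symm⟩
    obtain ⟨u, v, rfl, rfl, huv⟩ := ih (Nat.succ_injective (Multiset.card_cons a as ▸ hs))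
    exact ⟨Fin.cons a u, Fin.cons b v, by simp, by simp, Fin.cases hab huv⟩

namespace Polynomial

section CommRing

variable {R : Type*} [CommRing R]

theorem Monic.divByMonic_X_sub_C [Nontrivial R] {p : R[X]} (hp : p.Monic) {n : ℕ}
    (hpn : p.natDegree = n + 1) (a : R) :
    (p /ₘ (X - C a)).Monic ∧ (p /ₘ (X - C a)).natDegree = n := by
  refine ⟨?_, by rw [natDegree_divByMonic _ (monic_X_sub_C a), natDegree_X_sub_C, hpn]; rfl⟩
  rw [Monic, leadingCoeff_divByMonic_of_monic (monic_X_sub_C a), hp.leadingCoeff]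
  rw [degree_X_sub_C, degree_eq_natDegree hp.ne_zero, hpn]
  exact_mod_cast Nat.le_add_left 1 n

theorem coeff_divByMonic_X_sub_C_eq_sum_Icc {p : R[X]} {N : ℕ} (hp : p.natDegree ≤ N) (a : R)
    (k : ℕ) : (p /ₘ (X - C a)).coeff k = ∑ i ∈ Icc (k + 1) N, a ^ (i - (k + 1)) * p.coeff i := by
  rw [coeff_divByMonic_X_sub_C]
  refine sum_subset (Icc_subset_Icc_right hp) fun i hi hi' => ?_
  simp only [mem_Icc, not_and, not_le] at hi hi'
  rw [coeff_eq_zero_of_natDegree_lt (hi' hi.1), mul_zero]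

theorem roots_eq_cons_roots_divByMonic [IsDomain R] {p : R[X]} (hp : p ≠ 0) {a : R}
    (ha : p.IsRoot a) : p.roots = a ::ₘ (p /ₘ (X - C a)).roots := by
  have h := mul_divByMonic_eq_iff_isRoot.2 ha
  conv_lhs => rw [← h]
  rw [roots_mul (by rwa [h]), roots_X_sub_C, Multiset.singleton_add]

end CommRing

theorem norm_coeff_sub_lt_of_forall_lt_natDegree {R : Type*} [SeminormedRing R] {p q : R[X]}
    (hp : p.Monic) (hq : q.Monic) (hpq : p.natDegree = q.natDegree) {δ : ℝ} (hδ : 0 < δ)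
    (h : ∀ i < p.natDegree, ‖p.coeff i - q.coeff i‖ < δ) (i : ℕ) :
    ‖p.coeff i - q.coeff i‖ < δ := by
  rcases lt_or_ge i p.natDegree with hi | hi
  · exact h i hi
  suffices p.coeff i = q.coeff i by rwa [this, sub_self, norm_zero]
  rcases hi.eq_or_lt with rfl | hi
  · rw [hp.coeff_natDegree, hpq, hq.coeff_natDegree]
  · rw [coeff_eq_zero_of_natDegree_lt hi, coeff_eq_zero_of_natDegree_lt (hpq ▸ hi)]

theorem exists_norm_coeff_divByMonic_X_sub_C_sub_lt {R : Type*} [NormedCommRing R] {N : ℕ}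
    {p : R[X]} (hp : p.natDegree ≤ N) (a : R) {δ : ℝ} (hδ : 0 < δ) :
    ∃ γ > 0, ∀ (q : R[X]) (b : R), q.natDegree ≤ N → ‖a - b‖ < γ →
      (∀ i, ‖p.coeff i - q.coeff i‖ < γ) →
      ∀ k, ‖(p /ₘ (X - C a)).coeff k - (q /ₘ (X - C b)).coeff k‖ < δ := by
  let E : R × R[X] → ℕ → R := fun x k => ∑ i ∈ Icc (k + 1) N, x.1 ^ (i - (k + 1)) * x.2.coeff i
  let Φ : R × R[X] → R × (Fin (N + 1) → R) := fun x => (x.1, fun i => x.2.coeff i)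
  have hE : ∀ k, Tendsto (E · k) (comap Φ (𝓝 (Φ (a, p)))) (𝓝 (E (a, p) k)) := by
    intro k
    refine tendsto_finsetSum _ fun i hi => Tendsto.mul ?_ ?_
    · exact ((continuous_fst.tendsto _).comp tendsto_comap).pow _
    · have hiN : i < N + 1 := Nat.lt_succ_of_le (mem_Icc.1 hi).2
      have : Continuous fun y : R × (Fin (N + 1) → R) => y.2 ⟨i, hiN⟩ := by fun_prop
      exact (this.tendsto _).comp tendsto_comap
  have hev : ∀ᶠ x in comap Φ (𝓝 (Φ (a, p))), ∀ k ∈ range N, dist (E (a, p) k) (E x k) < δ :=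
    (eventually_all_finset _).2 fun k _ =>
      (hE k).eventually (Metric.ball_mem_nhds _ hδ) |>.mono fun _ h => by rwa [dist_comm]
  obtain ⟨t, ht, hts⟩ := mem_comap.1 hev
  obtain ⟨γ, hγ, hball⟩ := Metric.mem_nhds_iff.1 ht
  refine ⟨γ, hγ, fun q b hq hab hpq k => ?_⟩
  rw [coeff_divByMonic_X_sub_C_eq_sum_Icc hp, coeff_divByMonic_X_sub_C_eq_sum_Icc hq]
  rcases lt_or_ge k N with hk | hk
  · have hΦ : Φ (b, q) ∈ Metric.ball (Φ (a, p)) γ := by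
      rw [Metric.mem_ball', Prod.dist_eq, max_lt_iff, dist_pi_lt_iff hγ]
      exact ⟨by rwa [dist_eq_norm], fun i => by rw [dist_eq_norm]; exact hpq i⟩
    simpa [dist_eq_norm] using hts (hball hΦ) k (mem_range.2 hk)
  · simpa [Icc_eq_empty_of_lt (Nat.lt_succ_of_le hk)] using hδ

section IsAlgClosed

variable {K : Type*} [NormedField K] [IsAlgClosed K]

theorem exists_root_norm_sub_lt_of_norm_coeff_sub_lt {p : K[X]} (hp : p.Monic) {a : K}
    (ha : p.IsRoot a) {γ : ℝ} (hγ : 0 < γ) :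
    ∃ δ > 0, ∀ q : K[X], q.Monic → q.natDegree = p.natDegree →
      (∀ i, ‖p.coeff i - q.coeff i‖ < δ) → ∃ b ∈ q.roots, ‖a - b‖ < γ := by
  set N := p.natDegree
  set M := max ‖a‖ 1
  have hM : 0 < M := lt_max_of_lt_right one_pos
  have hN : N ≠ 0 := fun h => by simp [hp.natDegree_eq_zero.1 h] at ha
  -- chosen so that the bound `((N + 1) * δ) ^ (1 / N) * M` of the library estimate is `γ / 2`
  refine ⟨(γ / (2 * M)) ^ N / (N + 1), by positivity, fun q hq hqN hpq => ?_⟩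
  obtain ⟨b, hb, hab⟩ := exists_roots_norm_sub_lt_of_norm_coeff_sub_lt
    (ε := (γ / (2 * M)) ^ N / (N + 1)) (by positivity) ha hp hq hqN
    (fun i => by rw [norm_sub_rev]; exact hpq i) (IsAlgClosed.splits q)
  refine ⟨b, hb, hab.trans_le (le_of_eq_of_le ?_ (half_le_self hγ.le))⟩
  rw [mul_div_cancel₀ _ (by positivity), Real.pow_rpow_inv_natCast (by positivity) hN]
  change γ / (2 * M) * M = γ / 2
  field_simp

theorem exists_rel_roots_of_norm_coeff_sub_lt {p : K[X]} (hp : p.Monic) {ε : ℝ} (hε : 0 < ε) :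
    ∃ δ > 0, ∀ q : K[X], q.Monic → q.natDegree = p.natDegree →
      (∀ i, ‖p.coeff i - q.coeff i‖ < δ) →
      Multiset.Rel (fun a b => ‖a - b‖ < ε) p.roots q.roots := by
  induction h : p.natDegree generalizing p with
  | zero =>
    refine ⟨1, one_pos, fun q hq hqn _ => ?_⟩
    rw [hp.natDegree_eq_zero.1 h, hq.natDegree_eq_zero.1 hqn, roots_one]
    exact .zero
  | succ n ih =>
    obtain ⟨a, ha⟩ := IsAlgClosed.exists_root p
      (natDegree_pos_iff_degree_pos.1 (h ▸ n.succ_pos)).ne'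
    obtain ⟨hp', hpn'⟩ := hp.divByMonic_X_sub_C h a
    obtain ⟨δ', hδ', hroots'⟩ := ih hp' hpn'
    obtain ⟨γ, hγ, hquot⟩ := exists_norm_coeff_divByMonic_X_sub_C_sub_lt h.le a hδ'
    obtain ⟨δ, hδ, hnear⟩ := exists_root_norm_sub_lt_of_norm_coeff_sub_lt hp ha (lt_min hγ hε)
    refine ⟨min δ γ, lt_min hδ hγ, fun q hq hqn hpq => ?_⟩
    obtain ⟨b, hb, hab⟩ :=
      hnear q hq (hqn.trans h.symm) fun i => (hpq i).trans_le (min_le_left _ _)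
    obtain ⟨hq', hqn'⟩ := hq.divByMonic_X_sub_C hqn b
    rw [roots_eq_cons_roots_divByMonic hp.ne_zero ha,
      roots_eq_cons_roots_divByMonic hq.ne_zero (isRoot_of_mem_roots hb)]
    refine .cons (hab.trans_le (min_le_right _ _)) (hroots' _ hq' hqn' ?_)
    exact hquot q b hqn.le (hab.trans_le (min_le_left _ _))
      fun i => (hpq i).trans_le (min_le_right _ _)

end IsAlgClosed

end Polynomial

theorem monic_roots_continuous
    (n : ℕ) (p : Polynomial ℂ) (hp : p.Monic) (hpn : p.natDegree = n) :
    ∀ ε > (0 : ℝ), ∃ δ > (0 : ℝ), ∀ q : Polynomial ℂ, q.Monic → q.natDegree = n →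
      (∀ i < n, ‖p.coeff i - q.coeff i‖ < δ) →
      ∃ (r s : Fin n → ℂ),
        p.roots = (List.ofFn r : Multiset ℂ) ∧
        q.roots = (List.ofFn s : Multiset ℂ) ∧
        ∀ i, ‖r i - s i‖ < ε := by
  intro ε hε
  obtain ⟨δ, hδ, hroots⟩ := exists_rel_roots_of_norm_coeff_sub_lt hp hε
  refine ⟨δ, hδ, fun q hq hqn hpq => ?_⟩
  have hpq' := norm_coeff_sub_lt_of_forall_lt_natDegree hp hq (hpn.trans hqn.symm) hδ (hpn ▸ hpq)
  exact (hroots q hq (hqn.trans hpn.symm) hpq').exists_ofFn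
    (IsAlgClosed.card_roots_eq_natDegree.trans hpn)
end

section
/- The map from ℂⁿ to monic complex polynomials of degree n sending (r₁,…,rₙ) to ∏(X - rᵢ), followed by extraction of the coefficient vector, is continuous, and it is invariant under permutation of (r₁,…,rₙ); hence it descends to a continuous bijection from the quotient of ℂⁿ by the symmetric group Sₙ onto ℂⁿ (the coefficient space). -/
/-!
The coefficients of `∏ (X - C rⱼ)` are sums of products of the `rⱼ`, hence continuous, and the
product is unchanged by reordering its factors. A coefficient vector `a` is that of the monic
polynomial `Xⁿ + ∑ aᵢ Xⁱ`, which splits over `ℂ` into `n` linear factors, giving surjectivity.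
Two root tuples with the same coefficient vector give the same polynomial, hence the same
multiset of roots, and a permutation matching the fibres of the two tuples relates them.
-/

open Polynomial Finset

section Continuity

variable {α R : Type*} [TopologicalSpace α] [TopologicalSpace R]

theorem Polynomial.continuous_coeff_mul [Semiring R] [IsTopologicalSemiring R] {f g : α → R[X]}
    (hf : ∀ i, Continuous fun a => (f a).coeff i) (hg : ∀ i, Continuous fun a => (g a).coeff i)
    (i : ℕ) : Continuous fun a => (f a * g a).coeff i := by
  simp only [coeff_mul]
  exact continuous_finsetSum _ fun k _ => (hf k.1).mul (hg k.2)

theorem Polynomial.continuous_coeff_prod [CommSemiring R] [IsTopologicalSemiring R] {ι : Type*}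
    (s : Finset ι) {f : ι → α → R[X]} (hf : ∀ j ∈ s, ∀ i, Continuous fun a => (f j a).coeff i)
    (i : ℕ) : Continuous fun a => (∏ j ∈ s, f j a).coeff i := by
  simpa only [Finset.prod_apply] using
    Finset.prod_induction f (fun F : α → R[X] => ∀ i, Continuous fun a => (F a).coeff i)
      (fun _ _ => continuous_coeff_mul)
      (fun _ => by simpa only [Pi.one_apply] using continuous_const) hf i

theorem Polynomial.continuous_coeff_X_sub_C [Ring R] [IsTopologicalRing R] {g : α → R}
    (hg : Continuous g) (i : ℕ) : Continuous fun a => (X - C (g a)).coeff i := by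
  simp only [coeff_sub, coeff_X, coeff_C]
  split_ifs <;> fun_prop

end Continuity

theorem Polynomial.Monic.eq_of_coeff_eq {R : Type*} [Semiring R] {p q : R[X]} {n : ℕ}
    (hp : p.Monic) (hq : q.Monic) (hpn : p.natDegree = n) (hqn : q.natDegree = n)
    (h : ∀ i < n, p.coeff i = q.coeff i) : p = q := by
  ext k
  rcases lt_trichotomy k n with hk | rfl | hk
  · exact h k hk
  · rw [← hpn, hp.coeff_natDegree, hpn, ← hqn, hq.coeff_natDegree]
  · rw [coeff_eq_zero_of_natDegree_lt (hpn ▸ hk), coeff_eq_zero_of_natDegree_lt (hqn ▸ hk)]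

theorem Polynomial.exists_monic_natDegree_coeff_eq {R : Type*} [Semiring R] [Nontrivial R] {n : ℕ}
    (a : Fin n → R) : ∃ p : R[X], p.Monic ∧ p.natDegree = n ∧ ∀ i : Fin n, p.coeff i = a i := by
  set q := (degreeLTEquiv R n).symm a
  have hq : (q : R[X]).degree < n := mem_degreeLT.mp q.2
  refine ⟨X ^ n + (q : R[X]), monic_X_pow_add hq, ?_, fun i => ?_⟩
  · rw [natDegree_add_eq_left_of_degree_lt (by rwa [degree_X_pow]), natDegree_X_pow]
  · rw [coeff_add, coeff_X_pow, if_neg i.isLt.ne, zero_add]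
    exact congrFun ((degreeLTEquiv R n).apply_symm_apply a) i

theorem Multiset.exists_fin_map_eq {α : Type*} {s : Multiset α} {n : ℕ}
    (hs : Multiset.card s = n) : ∃ r : Fin n → α, univ.val.map r = s := by
  obtain ⟨l, rfl, rfl⟩ : ∃ l : List α, l.length = n ∧ (l : Multiset α) = s :=
    ⟨s.toList, by simpa using hs, s.coe_toList⟩
  exact ⟨l.get, by rw [Fin.univ_val_map, List.ofFn_get]⟩

theorem Equiv.Perm.exists_comp_eq_of_map_univ_eq {ι α : Type*} [Fintype ι] {r s : ι → α}
    (h : univ.val.map r = univ.val.map s) : ∃ σ : Equiv.Perm ι, r ∘ σ = s := by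
  classical
  have hfiber (a : α) : Fintype.card {i // s i = a} = Fintype.card {i // r i = a} := by
    simpa [Multiset.count_map, Fintype.card_subtype, Finset.card_def, Finset.filter_val, eq_comm]
      using congrArg (Multiset.count a) h.symm
  exact ⟨Equiv.ofFiberEquiv fun a => Fintype.equivOfCardEq (hfiber a),
    funext (Equiv.ofFiberEquiv_map _)⟩

theorem Polynomial.roots_finset_prod_X_sub_C {R ι : Type*} [CommRing R] [IsDomain R]
    (s : Finset ι) (r : ι → R) : (∏ j ∈ s, (X - C (r j))).roots = s.val.map r := by
  rw [← roots_multiset_prod_X_sub_C (s.val.map r), Multiset.map_map, prod_map_val]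
  rfl

theorem Polynomial.Monic.exists_prod_X_sub_C_eq {R : Type*} [CommRing R] [IsDomain R] {p : R[X]}
    (hp : p.Monic) (hroots : Multiset.card p.roots = p.natDegree) :
    ∃ r : Fin p.natDegree → R, ∏ j, (X - C (r j)) = p := by
  obtain ⟨r, hr⟩ := Multiset.exists_fin_map_eq hroots
  refine ⟨r, Eq.trans ?_ (prod_multiset_X_sub_C_of_monic_of_roots_card_eq hp hroots)⟩
  rw [← hr, Multiset.map_map, prod_map_val]
  rfl

theorem roots_to_coeffs_continuous_perm_invariant_bijective (n : ℕ) :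
    Continuous (fun r : Fin n → ℂ => fun i : Fin n => (∏ j, (X - C (r j))).coeff i) ∧
    (∀ (σ : Equiv.Perm (Fin n)) (r : Fin n → ℂ),
      (fun i : Fin n => (∏ j, (X - C ((r ∘ σ) j))).coeff i) =
        (fun i : Fin n => (∏ j, (X - C (r j))).coeff i)) ∧
    Function.Surjective
      (fun r : Fin n → ℂ => fun i : Fin n => (∏ j, (X - C (r j))).coeff i) ∧
    (∀ r s : Fin n → ℂ,
      (fun i : Fin n => (∏ j, (X - C (r j))).coeff i) =
        (fun i : Fin n => (∏ j, (X - C (s j))).coeff i) →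
      ∃ σ : Equiv.Perm (Fin n), r ∘ σ = s) := by
  refine ⟨?_, fun σ r => ?_, fun a => ?_, fun r s h => ?_⟩
  · exact continuous_pi fun i =>
      continuous_coeff_prod _ (fun j _ => continuous_coeff_X_sub_C (continuous_apply j)) i
  · simp only [Function.comp_apply, Equiv.prod_comp σ fun j => X - C (r j)]
  · obtain ⟨p, hp, rfl, hpa⟩ := exists_monic_natDegree_coeff_eq a
    obtain ⟨r, hr⟩ := hp.exists_prod_X_sub_C_eq IsAlgClosed.card_roots_eq_natDegree
    exact ⟨r, funext fun i => by simp only [hr, hpa]⟩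
  · have hprod : ∏ j, (X - C (r j)) = ∏ j, (X - C (s j)) :=
      (monic_prod_X_sub_C r univ).eq_of_coeff_eq (monic_prod_X_sub_C s univ) (by simp) (by simp)
        fun i hi => congrFun h ⟨i, hi⟩
    refine Equiv.Perm.exists_comp_eq_of_map_univ_eq ?_
    rw [← roots_finset_prod_X_sub_C, hprod, roots_finset_prod_X_sub_C]
end
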